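/- arXiv:1206.3050 — 4 statements merged into one kernel-verified Lean document; each statement's English description precedes it below -/
import Mathlib

section
/- Let e = (e_1,…,e_n) be an n-tuple of positive integers. For every positive integer N and every v ∈ ℝ^n one has 𝐁_e(v,Q) = N^{|e|−n} · Σ_{y∈{0,…,N−1}^n} 𝐁_e((v+y)/N, Q). In other words, the Q-deformed function 𝐁_e(·,Q) is a distribution on (ℚ/ℤ)^n of weight |e|−n. -/
open scoped BigOperators
open scoped Classical

/-- The periodic Bernoulli function `B_k`. For `k ≠ 1` it is `b_k({x})`; for `k = 1`
it is `{x} - 1/2` off the integers and `0` on the integers. -/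
noncomputable def periodicBernoulli (k : ℕ) (x : ℝ) : ℝ :=
  if k = 1 then (if ∃ z : ℤ, x = (z : ℝ) then 0 else Int.fract x - 1 / 2)
  else Polynomial.eval (Int.fract x) ((Polynomial.bernoulli k).map (algebraMap ℚ ℝ))

/-- The set `J(e,v) = {j : e_j = 1 and v_j ∈ ℤ}`. -/
noncomputable def Jset {n : ℕ} (e : Fin n → ℕ) (v : Fin n → ℝ) : Finset (Fin n) :=
  Finset.univ.filter (fun j => e j = 1 ∧ ∃ z : ℤ, v j = (z : ℝ))

/-- The `Q`-deformed product of periodic Bernoulli functions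
`𝐁_e(v,Q) = (1/m) Σ_i (∏_{j∈J(e,v)} sign(Q_{ij})/2) ∏_{j∉J(e,v)} B_{e_j}(v_j)`. -/
noncomputable def BBQ {n m : ℕ} (Q : Matrix (Fin m) (Fin n) ℝ) (e : Fin n → ℕ)
    (v : Fin n → ℝ) : ℝ :=
  (1 / (m : ℝ)) * ∑ i : Fin m,
    (∏ j ∈ Jset e v, Real.sign (Q i j) / 2) *
      ∏ j ∈ (Jset e v)ᶜ, periodicBernoulli (e j) (v j)

/-!
Each summand of `BBQ Q e` is a product over the coordinates of one-variable functions
`x ↦ b_k({x})`, except that for `k = 1` the value at the integers is replaced by `sign(Q_ij)/2`,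
which adds a multiple of the indicator of `ℤ`. Both functions satisfy the one-variable
distribution relation, with weights `k - 1` and `0`: both sides are `1`-periodic in `x`, and for
`x ∈ [0, 1)` the relation for `b_k` is the multiplication theorem for Bernoulli polynomials, while
`(x + y)/N` with `0 ≤ y < N` is an integer only for `x = y = 0`. The relation is linear, and
products in separate variables multiply the relations and add the weights.
-/

open Finset Function

def IsDistribution (w : ℤ) (f : ℝ → ℝ) : Prop :=
  ∀ N : ℕ, 0 < N → ∀ x, f x = (N : ℝ) ^ w * ∑ y : Fin N, f ((x + y) / N)

namespace IsDistribution

variable {w : ℤ} {f g : ℝ → ℝ}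

lemma add (hf : IsDistribution w f) (hg : IsDistribution w g) :
    IsDistribution w (fun x => f x + g x) := by
  intro N hN x
  rw [sum_add_distrib, mul_add, ← hf N hN x, ← hg N hN x]

lemma const_mul (hf : IsDistribution w f) (c : ℝ) : IsDistribution w (fun x => c * f x) := by
  intro N hN x
  rw [← mul_sum, mul_left_comm, ← hf N hN x]

lemma prod {ι : Type*} [Fintype ι] [DecidableEq ι] {w : ι → ℤ} {f : ι → ℝ → ℝ}
    (hf : ∀ j, IsDistribution (w j) (f j)) {N : ℕ} (hN : 0 < N) (v : ι → ℝ) :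
    ∏ j, f j (v j) = (N : ℝ) ^ (∑ j, w j) *
      ∑ y : ι → Fin N, ∏ j, f j ((v j + (y j : ℕ)) / N) := by
  have hN₀ : (N : ℝ) ≠ 0 := by positivity
  rw [prod_congr rfl fun j _ => hf j N hN (v j), prod_mul_distrib, Fintype.prod_sum]
  congr 1
  induction (univ : Finset ι) using Finset.cons_induction with
  | empty => simp
  | cons i s hi ih => rw [prod_cons, sum_cons, ih, zpow_add₀ hN₀]

end IsDistribution

lemma Function.Periodic.sum_fin_add_div {h : ℝ → ℝ} (hh : Periodic h 1) (N : ℕ) :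
    Periodic (fun x => ∑ y : Fin N, h ((x + y) / N)) 1 := by
  intro x
  cases N with
  | zero => simp
  | succ M =>
    show ∑ y : Fin (M + 1), h ((x + 1 + y) / (M + 1 : ℕ)) =
      ∑ y : Fin (M + 1), h ((x + y) / (M + 1 : ℕ))
    rw [Fin.sum_univ_castSucc, Fin.sum_univ_succ, add_comm]
    congr 1
    · rw [Fin.val_last, Fin.val_zero, Nat.cast_zero, add_zero, ← hh (x / _)]
      congr 1
      field_simp
      push_cast
      ring
    · refine sum_congr rfl fun y _ => ?_
      simp only [Fin.val_castSucc, Fin.val_succ, Nat.cast_succ]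
      ring_nf

lemma sum_fract_add_div (g : ℝ → ℝ) (N : ℕ) (x : ℝ) :
    ∑ y : Fin N, g (Int.fract ((x + y) / N)) = ∑ y : Fin N, g ((Int.fract x + y) / N) := by
  have hper := ((Int.fract_periodic ℝ).comp g).sum_fin_add_div N
  simp only [comp_apply] at hper
  rw [← hper.sub_int_mul_eq ⌊x⌋, mul_one, ← Int.fract]
  refine sum_congr rfl fun y _ => congrArg g (Int.fract_eq_self.2 ⟨by positivity, ?_⟩)
  have hN : (0 : ℝ) < N := by exact_mod_cast y.pos
  rw [div_lt_one hN]
  have hy : (y : ℝ) + 1 ≤ N := by exact_mod_cast y.isLt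
  linarith [Int.fract_lt_one x]

lemma isDistribution_bernoulliFun_fract (k : ℕ) :
    IsDistribution (k - 1) (fun x => bernoulliFun k (Int.fract x)) := by
  intro N hN x
  have hN₀ : (N : ℝ) ≠ 0 := by positivity
  rw [sum_fract_add_div (bernoulliFun k), zpow_sub_one₀ hN₀, zpow_natCast, ← div_eq_mul_inv,
    Fin.sum_univ_eq_sum_range (fun y : ℕ => bernoulliFun k ((Int.fract x + y) / N))]
  simpa only [mul_div_cancel₀ _ hN₀, add_div] using bernoulliFun_mul k hN.ne' (Int.fract x / N)

lemma isDistribution_indicator_fract_eq_zero :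
    IsDistribution 0 (fun x => if Int.fract x = 0 then 1 else 0) := by
  intro N hN x
  rw [sum_fract_add_div (fun t => if t = 0 then 1 else 0), zpow_zero, one_mul]
  have hzero : ∀ y : Fin N, (Int.fract x + y) / N = 0 ↔ y = ⟨0, hN⟩ ∧ Int.fract x = 0 := by
    intro y
    rw [div_eq_zero_iff, add_eq_zero_iff_of_nonneg (Int.fract_nonneg x) (Nat.cast_nonneg _)]
    simp [Fin.ext_iff, hN.ne', and_comm]
  simp_rw [hzero, ite_and, sum_ite_eq', mem_univ, if_true]

noncomputable def periodicBernoulliWith (c : ℝ) (k : ℕ) (x : ℝ) : ℝ :=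
  if k = 1 ∧ ∃ z : ℤ, x = z then c else periodicBernoulli k x

lemma periodicBernoulliWith_of_ne_one (c : ℝ) {k : ℕ} (hk : k ≠ 1) :
    periodicBernoulliWith c k = fun x => bernoulliFun k (Int.fract x) := by
  funext x
  simp [periodicBernoulliWith, periodicBernoulli, bernoulliFun, hk]

lemma periodicBernoulliWith_one (c : ℝ) :
    periodicBernoulliWith c 1 = fun x =>
      bernoulliFun 1 (Int.fract x) + (c + 1 / 2) * if Int.fract x = 0 then 1 else 0 := by
  funext x
  by_cases hx : ∃ z : ℤ, x = z
  · obtain ⟨z, rfl⟩ := hx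
    simp [periodicBernoulliWith]
  · have : Int.fract x ≠ 0 := fun h => hx <| by
      obtain ⟨z, hz⟩ := Int.fract_eq_zero_iff.1 h
      exact ⟨z, hz.symm⟩
    simp [periodicBernoulliWith, periodicBernoulli, hx, this]

lemma isDistribution_periodicBernoulliWith (c : ℝ) (k : ℕ) :
    IsDistribution (k - 1) (periodicBernoulliWith c k) := by
  rcases eq_or_ne k 1 with rfl | hk
  · rw [periodicBernoulliWith_one]
    exact (isDistribution_bernoulliFun_fract 1).add
      (by simpa using isDistribution_indicator_fract_eq_zero.const_mul (c + 1 / 2))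
  · rw [periodicBernoulliWith_of_ne_one c hk]
    exact isDistribution_bernoulliFun_fract k

lemma BBQ_eq_sum_prod {n m : ℕ} (Q : Matrix (Fin m) (Fin n) ℝ) (e : Fin n → ℕ) (v : Fin n → ℝ) :
    BBQ Q e v = 1 / m * ∑ i, ∏ j, periodicBernoulliWith (Real.sign (Q i j) / 2) (e j) (v j) := by
  refine congrArg _ (sum_congr rfl fun i _ => ?_)
  rw [← prod_mul_prod_compl (Jset e v)]
  congr 1 <;> refine prod_congr rfl fun j hj => ?_
  · rw [periodicBernoulliWith, if_pos (mem_filter.1 hj).2]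
  · rw [periodicBernoulliWith, if_neg fun h => mem_compl.1 hj (mem_filter.2 ⟨mem_univ j, h⟩)]

theorem BBQ_distribution_relation_general {n m : ℕ}
    (Q : Matrix (Fin m) (Fin n) ℝ)
    (e : Fin n → ℕ)
    (N : ℕ) (hN : 0 < N) (v : Fin n → ℝ) :
    BBQ Q e v = (N : ℝ) ^ ((∑ j, (e j : ℤ)) - (n : ℤ)) *
      ∑ y : Fin n → Fin N, BBQ Q e (fun j => (v j + ((y j : ℕ) : ℝ)) / (N : ℝ)) := by
  have hweight : ∑ j, ((e j : ℤ) - 1) = ∑ j, (e j : ℤ) - n := by simp [sum_sub_distrib]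
  have hrow := fun i : Fin m => IsDistribution.prod
    (fun j => isDistribution_periodicBernoulliWith (Real.sign (Q i j) / 2) (e j)) hN v
  simp only [BBQ_eq_sum_prod, hrow, hweight, mul_sum]
  rw [sum_comm]
  exact sum_congr rfl fun _ _ => sum_congr rfl fun _ _ => mul_left_comm _ _ _

/-- `𝐁_e(·,Q)` is a distribution on `(ℚ/ℤ)^n` of weight `|e| - n`:
`𝐁_e(v,Q) = N^{|e|-n} Σ_{y ∈ {0,…,N-1}^n} 𝐁_e((v+y)/N, Q)`. -/
theorem BBQ_distribution_relation {n m : ℕ} (hm : 0 < m)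
    (Q : Matrix (Fin m) (Fin n) ℝ) (hQ : ∀ i j, Q i j ≠ 0)
    (e : Fin n → ℕ) (he : ∀ j, 0 < e j)
    (N : ℕ) (hN : 0 < N) (v : Fin n → ℝ) :
    BBQ Q e v = (N : ℝ) ^ ((∑ j, (e j : ℤ)) - (n : ℤ)) *
      ∑ y : Fin n → Fin N, BBQ Q e (fun j => (v j + ((y j : ℕ) : ℝ)) / (N : ℝ)) :=
  BBQ_distribution_relation_general Q e N hN v
end

section
/- Let ℓ be a prime, let r be an integer not divisible by ℓ, and let x ∈ ℝ. Then the cyclotomic Dedekind sum B_1^{exp}(x,r) := Σ_{m=1}^{ℓ} e(rm/ℓ)·B_1((x+m)/ℓ) satisfies B_1^{exp}(x,r) = e(−r⌊x⌋/ℓ)/(e(r/ℓ)−1) + (δ_x/2)·e(−rx/ℓ), where δ_x = 1 if x ∈ ℤ and δ_x = 0 otherwise. -/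
open scoped BigOperators
open scoped Classical

/-- `e(t) = exp(2πit)`. -/
noncomputable def eE (t : ℝ) : ℂ := Complex.exp (2 * Real.pi * Complex.I * t)

/-!
The summand `m ↦ e(rm/ℓ) B_1((x+m)/ℓ)` is `ℓ`-periodic in `m`, so the sum may be taken over
`m = j - ⌊x⌋` with `0 ≤ j < ℓ`. Writing `ζ = e(r/ℓ)`, a nontrivial `ℓ`-th root of unity, it becomes
`e(-r⌊x⌋/ℓ) Σ_j ζ^j B_1((j + {x})/ℓ)` with every argument in `[0, 1)`, where `B_1(y) = y - 1/2`
except for the correction `1/2` at `y = 0`, i.e. at `j = 0` when `x ∈ ℤ`. Since `Σ ζ^j = 0` and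
`Σ j ζ^j = ℓ/(ζ - 1)`, what remains is `1/(ζ - 1)` plus that correction.
-/

open Finset

lemma eE_add (s t : ℝ) : eE (s + t) = eE s * eE t := by
  rw [eE, eE, eE, ← Complex.exp_add]
  push_cast
  ring_nf

lemma eE_pow (t : ℝ) (k : ℕ) : eE t ^ k = eE (k * t) := by
  rw [eE, eE, ← Complex.exp_nat_mul]
  push_cast
  ring_nf

lemma eE_eq_one_iff (t : ℝ) : eE t = 1 ↔ ∃ k : ℤ, t = k := by
  have h2πI : 2 * Real.pi * Complex.I ≠ 0 := by simp [Real.pi_ne_zero]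
  rw [eE, Complex.exp_eq_one_iff]
  refine exists_congr fun k => ?_
  rw [mul_comm (k : ℂ), mul_right_inj' h2πI]
  exact_mod_cast Iff.rfl

lemma eE_add_intCast (t : ℝ) (k : ℤ) : eE (t + k) = eE t := by
  rw [eE_add, (eE_eq_one_iff _).2 ⟨k, rfl⟩, mul_one]

lemma eE_div_pow_self {ℓ : ℕ} (hℓ : ℓ ≠ 0) (r : ℤ) : eE (r / ℓ) ^ ℓ = 1 := by
  rw [eE_pow, eE_eq_one_iff]
  exact ⟨r, by field_simp⟩

lemma eE_div_ne_one {ℓ : ℕ} (hℓ : ℓ ≠ 0) {r : ℤ} (hr : ¬ (ℓ : ℤ) ∣ r) : eE (r / ℓ) ≠ 1 := by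
  rw [Ne, eE_eq_one_iff]
  rintro ⟨k, hk⟩
  rw [div_eq_iff (by exact_mod_cast hℓ)] at hk
  exact hr ⟨k, by exact_mod_cast hk.trans (mul_comm _ _)⟩

lemma periodicBernoulli_periodic (k : ℕ) : Function.Periodic (periodicBernoulli k) 1 := by
  intro y
  have hint : (∃ z : ℤ, y + 1 = z) ↔ ∃ z : ℤ, y = z :=
    ⟨fun ⟨z, hz⟩ => ⟨z - 1, by push_cast; linarith⟩,
      fun ⟨z, hz⟩ => ⟨z + 1, by push_cast; linarith⟩⟩
  simp only [periodicBernoulli, Int.fract_add_one, hint]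

lemma periodicBernoulli_one_of_mem_Ico {y : ℝ} (hy : y ∈ Set.Ico 0 1) :
    periodicBernoulli 1 y = y - 1 / 2 + if y = 0 then 1 / 2 else 0 := by
  have hint : (∃ z : ℤ, y = z) ↔ y = 0 := by
    simpa [Int.fract_eq_self.2 hy, eq_comm] using (Int.fract_eq_zero_iff (a := y)).symm
  rw [periodicBernoulli, if_pos rfl, Int.fract_eq_self.2 hy]
  split_ifs <;> simp_all

lemma sub_one_mul_sum_range_mul_pow {R : Type*} [CommRing R] (ζ : R) (n : ℕ) :
    (ζ - 1) * ∑ j ∈ range n, (j : R) * ζ ^ j = n * ζ ^ n - ζ ^ n + 1 - ∑ j ∈ range n, ζ ^ j := by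
  induction n with
  | zero => simp
  | succ n ih =>
    rw [sum_range_succ, sum_range_succ, mul_add, ih]
    push_cast
    ring

section RootOfUnity

variable {K : Type*} [Field K] {ζ : K} {n : ℕ}

lemma geom_sum_eq_zero_of_pow_eq_one (hζn : ζ ^ n = 1) (hζ : ζ ≠ 1) :
    ∑ j ∈ range n, ζ ^ j = 0 := by
  rw [geom_sum_eq hζ, hζn, sub_self, zero_div]

lemma sum_range_mul_pow_of_pow_eq_one (hζn : ζ ^ n = 1) (hζ : ζ ≠ 1) :
    ∑ j ∈ range n, (j : K) * ζ ^ j = n / (ζ - 1) := by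
  rw [eq_div_iff (sub_ne_zero.2 hζ), mul_comm, sub_one_mul_sum_range_mul_pow, hζn,
    geom_sum_eq_zero_of_pow_eq_one hζn hζ]
  ring

end RootOfUnity

lemma Function.Periodic.sum_range_add_intCast {M : Type*} [AddCommGroup M] {g : ℤ → M} {n : ℕ}
    (hg : Function.Periodic g n) (c : ℤ) : ∑ j ∈ range n, g (j + c) = ∑ j ∈ range n, g j := by
  -- the window of length `n + 1` starting at `c` splits off either `g c` or `g (n + c) = g c`
  have step : ∀ c : ℤ, ∑ j ∈ range n, g (j + (c + 1)) = ∑ j ∈ range n, g (j + c) := by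
    intro c
    have h := (sum_range_succ (fun j : ℕ => g (j + c)) n).symm.trans
      (sum_range_succ' (fun j : ℕ => g (j + c)) n)
    simp only [Nat.cast_succ, Nat.cast_zero, zero_add, add_comm (n : ℤ) c, hg c] at h
    simpa only [add_assoc, add_comm 1 c] using (add_right_cancel h).symm
  induction c using Int.induction_on with
  | zero => simp
  | succ c ih => rw [step, ih]
  | pred c ih => rw [← ih, ← step, sub_add_cancel]

lemma sum_range_pow_mul_periodicBernoulli_one {ℓ : ℕ} (hℓ : ℓ ≠ 0) {ζ : ℂ} (hζℓ : ζ ^ ℓ = 1)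
    (hζ : ζ ≠ 1) {f : ℝ} (hf : f ∈ Set.Ico 0 1) :
    ∑ j ∈ range ℓ, ζ ^ j * (periodicBernoulli 1 ((j + f) / ℓ) : ℂ)
      = 1 / (ζ - 1) + if f = 0 then 1 / 2 else 0 := by
  have hℓR : (0 : ℝ) < ℓ := by positivity
  have hmem : ∀ j : ℕ, j < ℓ → (j + f) / ℓ ∈ Set.Ico 0 1 := fun j hj => by
    have : (j : ℝ) + 1 ≤ ℓ := by exact_mod_cast hj
    constructor
    · exact div_nonneg (by linarith [hf.1]) hℓR.le
    · rw [div_lt_one hℓR]; linarith [hf.2]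
  have hzero : ∀ j : ℕ, (j + f) / ℓ = 0 ↔ j = 0 ∧ f = 0 := fun j => by
    rw [div_eq_zero_iff, or_iff_left hℓR.ne', add_eq_zero_iff_of_nonneg (by positivity) hf.1]
    norm_cast
  have hterm : ∀ j ∈ range ℓ, ζ ^ j * (periodicBernoulli 1 ((j + f) / ℓ) : ℂ)
      = (ℓ : ℂ)⁻¹ * (j * ζ ^ j) + ((f : ℂ) / ℓ - 1 / 2) * ζ ^ j
        + if j = 0 ∧ f = 0 then 1 / 2 else 0 := fun j hj => by
    rw [periodicBernoulli_one_of_mem_Ico (hmem j (mem_range.1 hj))]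
    by_cases h : j = 0 ∧ f = 0
    · obtain ⟨rfl, rfl⟩ := h
      simp
    · rw [if_neg ((hzero j).not.2 h), if_neg h]
      push_cast
      field_simp
      ring
  have hindicator : ∑ j ∈ range ℓ, (if j = 0 ∧ f = 0 then (1 / 2 : ℂ) else 0)
      = if f = 0 then 1 / 2 else 0 := by
    by_cases hf0 : f = 0 <;> simp [hf0, Nat.pos_of_ne_zero hℓ]
  rw [sum_congr rfl hterm, sum_add_distrib, sum_add_distrib, ← mul_sum, ← mul_sum,
    sum_range_mul_pow_of_pow_eq_one hζℓ hζ, geom_sum_eq_zero_of_pow_eq_one hζℓ hζ, hindicator]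
  field_simp
  ring

lemma eE_mul_periodicBernoulli_periodic (k : ℕ) {ℓ : ℕ} (hℓ : ℓ ≠ 0) (r : ℤ) (x : ℝ) :
    Function.Periodic
      (fun m : ℤ => eE (r * m / ℓ) * (periodicBernoulli k ((x + m) / ℓ) : ℂ)) ℓ := by
  intro m
  have hB := periodicBernoulli_periodic k ((x + m) / ℓ)
  have he := eE_add_intCast (r * m / ℓ) r
  dsimp only
  rw [show (r : ℝ) * ↑(m + ℓ : ℤ) / ℓ = r * m / ℓ + r by push_cast; field_simp,
    show (x + ↑(m + ℓ : ℤ)) / ℓ = (x + m) / ℓ + 1 by push_cast; field_simp; ring, hB, he]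

/-- Evaluation of the cyclotomic Dedekind sum
`B_1^{exp}(x,r) = Σ_{m=1}^{ℓ} e(rm/ℓ)·B_1((x+m)/ℓ)`:
it equals `e(−r⌊x⌋/ℓ)/(e(r/ℓ)−1) + (δ_x/2)·e(−rx/ℓ)`. -/
theorem cyclotomicDedekindSum_eval (ℓ : ℕ) (hℓ : ℓ.Prime) (r : ℤ)
    (hr : ¬ (ℓ : ℤ) ∣ r) (x : ℝ) :
    ∑ m ∈ Finset.Icc 1 ℓ,
        eE (((r : ℝ) * (m : ℝ)) / (ℓ : ℝ)) *
          (periodicBernoulli 1 ((x + (m : ℝ)) / (ℓ : ℝ)) : ℂ)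
      = eE (-((r : ℝ) * ((⌊x⌋ : ℤ) : ℝ)) / (ℓ : ℝ)) / (eE ((r : ℝ) / (ℓ : ℝ)) - 1)
        + (((if ∃ z : ℤ, x = (z : ℝ) then 1 else 0) : ℂ) / 2) *
          eE (-((r : ℝ) * x) / (ℓ : ℝ)) := by
  have hℓ0 : ℓ ≠ 0 := hℓ.ne_zero
  set ζ := eE (r / ℓ)
  set g : ℤ → ℂ := fun m => eE (r * m / ℓ) * (periodicBernoulli 1 ((x + m) / ℓ) : ℂ)
  have hg : Function.Periodic g ℓ := eE_mul_periodicBernoulli_periodic 1 hℓ0 r x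
  have hshift : ∀ j : ℕ, g (j + -⌊x⌋)
      = eE (-(r * ⌊x⌋) / ℓ) * (ζ ^ j * (periodicBernoulli 1 ((j + Int.fract x) / ℓ) : ℂ)) := by
    intro j
    simp only [g, ζ, eE_pow, ← mul_assoc, ← eE_add]
    congr 3 <;> push_cast [Int.fract] <;> ring
  calc _ = ∑ j ∈ range ℓ, g (j + 1) := by
        rw [← Ico_add_one_right_eq_Icc, sum_Ico_eq_sum_range, add_tsub_cancel_right]
        simp [g, add_comm]
    _ = ∑ j ∈ range ℓ, g (j + -⌊x⌋) := by
        rw [hg.sum_range_add_intCast, hg.sum_range_add_intCast]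
    _ = _ := by
        rw [sum_congr rfl fun j _ => hshift j, ← mul_sum,
          sum_range_pow_mul_periodicBernoulli_one hℓ0 (eE_div_pow_self hℓ0 r) (eE_div_ne_one hℓ0 hr)
            ⟨Int.fract_nonneg x, Int.fract_lt_one x⟩]
        by_cases hx : ∃ z : ℤ, x = z
        · obtain ⟨z, rfl⟩ := hx
          simp only [Int.fract_intCast, Int.floor_intCast, if_true, exists_apply_eq_apply']
          ring
        · have hfract : Int.fract x ≠ 0 := fun h =>
            hx (by simpa [eq_comm] using Int.fract_eq_zero_iff.1 h)
          simp only [hfract, hx, if_false]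
          ring
end

section
/- Let A_1,…,A_n ∈ Γ_ℓ and let d = (d_1,…,d_n) with 1 ≤ d_i ≤ n and d ≠ (1,…,1). Then the map (x_1,x_2,…,x_n) ↦ (ℓx_1, x_2,…,x_n) restricts to a bijection from X'(d) ∩ ℤ^n onto X(d) ∩ ℤ^n. -/
/-!
Row vectors see `A_i' = π_ℓ A_i π_ℓ⁻¹` as `x A_i' = (x π_ℓ) A_i π_ℓ⁻¹`, where `x π_ℓ` is the
scaled vector `(ℓx_1, x_2, …, x_n)` and right multiplication by the diagonal `π_ℓ⁻¹` only rescales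
the pairings by nonzero factors. Hence `X'(d) ∩ ℤ^n` is the preimage of `X(d) ∩ ℤ^n`, and it
remains to show that every integer point `y` of `X(d)` has `ℓ ∣ y_1`. As `d ≠ (1,…,1)`, some
`d_i > 1`, so `y` is orthogonal to the first column of `A_i`. Over the local ring `ℤ_[ℓ]` this
column is `(a, 0, …, 0)` modulo `ℓ`, and `a` is a unit because `det A_i` is; so `ℓ ∣ y_1 a`, hence
`ℓ ∣ y_1`.
-/

open scoped BigOperators
open scoped Classical

/-- A rational number lies in `ℤ_(ℓ)` iff its (reduced) denominator is not divisible by `ℓ`. -/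
def InZloc (ℓ : ℕ) (q : ℚ) : Prop := ¬ ℓ ∣ q.den

/-- Membership in `X(d)` for an integer vector: for each `i`, the pairing of `x` with the
columns of `A_i` before the `d_i`-th vanishes, and the pairing with the `d_i`-th is nonzero. -/
def MemXd {n : ℕ} (A : Fin n → Matrix (Fin n) (Fin n) ℚ) (d : Fin n → Fin n)
    (x : Fin n → ℤ) : Prop :=
  ∀ i, (∀ j, j < d i → (∑ k, (x k : ℚ) * A i k j) = 0) ∧
    (∑ k, (x k : ℚ) * A i k (d i)) ≠ 0

/-- The matrix `π_ℓ = diag(ℓ,1,…,1)`. -/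
def piL (ℓ : ℕ) (n : ℕ) [NeZero n] : Matrix (Fin n) (Fin n) ℚ :=
  Matrix.diagonal (fun j => if j = 0 then (ℓ : ℚ) else 1)

/-- The matrix `π_ℓ⁻¹ = diag(1/ℓ,1,…,1)`. -/
noncomputable def piLinv (ℓ : ℕ) (n : ℕ) [NeZero n] : Matrix (Fin n) (Fin n) ℚ :=
  Matrix.diagonal (fun j => if j = 0 then (ℓ : ℚ)⁻¹ else 1)

namespace Matrix

variable {R ι : Type*} [CommRing R] [Fintype ι] [DecidableEq ι]

theorem det_mem_of_col_mem {I : Ideal R} {M : Matrix ι ι R} (j : ι) (h : ∀ k, M k j ∈ I) :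
    M.det ∈ I := by
  rw [← Ideal.Quotient.eq_zero_iff_mem, RingHom.map_det]
  exact det_eq_zero_of_column_eq_zero j fun k => Ideal.Quotient.eq_zero_iff_mem.2 (h k)

theorem mem_of_vecMul_apply_eq_zero {I : Ideal R} [I.IsPrime] {M : Matrix ι ι R}
    (hM : M.det ∉ I) {i j : ι} (hcol : ∀ k, k ≠ i → M k j ∈ I) {y : ι → R}
    (hy : (y ᵥ* M) j = 0) : y i ∈ I := by
  have hpivot : M i j ∉ I := fun hij =>
    hM (det_mem_of_col_mem j fun k => if hk : k = i then hk ▸ hij else hcol k hk)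
  have hsplit : y i * M i j + ∑ k ∈ Finset.univ.erase i, y k * M k j = 0 :=
    (Finset.add_sum_erase _ (fun k => y k * M k j) (Finset.mem_univ i)).trans hy
  have hrest : ∑ k ∈ Finset.univ.erase i, y k * M k j ∈ I :=
    I.sum_mem fun k hk => I.mul_mem_left _ (hcol k (Finset.ne_of_mem_erase hk))
  have hprod : y i * M i j ∈ I := by
    rw [eq_neg_of_add_eq_zero_left hsplit]
    exact I.neg_mem hrest
  exact (‹I.IsPrime›.mem_or_mem hprod).resolve_right hpivot

end Matrix

section PadicIntegral

open Matrix

variable {ℓ : ℕ} [Fact ℓ.Prime] {ι : Type*} [Fintype ι] [DecidableEq ι]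

noncomputable def InZloc.toPadicInt {q : ℚ} (h : InZloc ℓ q) : ℤ_[ℓ] :=
  ⟨q, Padic.norm_rat_le_one h⟩

noncomputable def Matrix.toPadicInt (A : Matrix ι ι ℚ) (hA : ∀ j k, InZloc ℓ (A j k)) :
    Matrix ι ι ℤ_[ℓ] :=
  Matrix.of fun j k => (hA j k).toPadicInt

theorem Matrix.coe_det_toPadicInt {A : Matrix ι ι ℚ} (hA : ∀ j k, InZloc ℓ (A j k)) :
    ((A.toPadicInt hA).det : ℚ_[ℓ]) = (A.det : ℚ_[ℓ]) :=
  calc ((A.toPadicInt hA).det : ℚ_[ℓ]) = PadicInt.Coe.ringHom (A.toPadicInt hA).det := rfl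
    _ = ((A.toPadicInt hA).map PadicInt.Coe.ringHom).det := RingHom.map_det _ _
    _ = (A.map (Rat.castHom ℚ_[ℓ])).det := rfl
    _ = Rat.castHom ℚ_[ℓ] A.det := (RingHom.map_det _ _).symm

theorem Matrix.isUnit_det_toPadicInt {A : Matrix ι ι ℚ} (hA : ∀ j k, InZloc ℓ (A j k))
    (hdet : ¬ (ℓ : ℤ) ∣ A.det.num) : IsUnit (A.toPadicInt hA).det := by
  have hne : A.det ≠ 0 := fun h => hdet (by simp [h])
  have hinv : InZloc ℓ A.det⁻¹ := by
    rwa [InZloc, Rat.den_inv_of_ne_zero hne, ← Int.natCast_dvd]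
  refine IsUnit.of_mul_eq_one hinv.toPadicInt (PadicInt.ext ?_)
  rw [PadicInt.coe_mul, coe_det_toPadicInt]
  simp [InZloc.toPadicInt, hne]

theorem natCast_dvd_of_sum_mul_eq_zero {A : Matrix ι ι ℚ} (hA : ∀ j k, InZloc ℓ (A j k))
    (hdet : ¬ (ℓ : ℤ) ∣ A.det.num) {i j : ι} (hcol : ∀ k, k ≠ i → InZloc ℓ (A k j / ℓ))
    {y : ι → ℤ} (hy : ∑ k, (y k : ℚ) * A k j = 0) : (ℓ : ℤ) ∣ y i := by
  set M := A.toPadicInt hA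
  have hdetM : M.det ∉ IsLocalRing.maximalIdeal ℤ_[ℓ] :=
    fun h => (IsLocalRing.mem_maximalIdeal _).1 h (A.isUnit_det_toPadicInt hA hdet)
  have hcolM : ∀ k, k ≠ i → M k j ∈ IsLocalRing.maximalIdeal ℤ_[ℓ] := fun k hk => by
    rw [PadicInt.maximalIdeal_eq_span_p, Ideal.mem_span_singleton]
    refine ⟨(hcol k hk).toPadicInt, PadicInt.ext ?_⟩
    have hℓ : (ℓ : ℚ) ≠ 0 := Nat.cast_ne_zero.2 (Fact.out : ℓ.Prime).ne_zero
    rw [PadicInt.coe_mul, PadicInt.coe_natCast]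
    change ((A k j : ℚ) : ℚ_[ℓ]) = ℓ * ((A k j / ℓ : ℚ) : ℚ_[ℓ])
    rw [← Rat.cast_natCast, ← Rat.cast_mul, mul_div_cancel₀ _ hℓ]
  have hyM : ((fun k => (y k : ℤ_[ℓ])) ᵥ* M) j = 0 := PadicInt.ext <| by
    rw [PadicInt.coe_zero, ← Rat.cast_zero, ← hy]
    push_cast [vecMul, dotProduct, PadicInt.coe_sum, PadicInt.coe_mul, PadicInt.coe_intCast]
    rfl
  have hyi := Matrix.mem_of_vecMul_apply_eq_zero hdetM hcolM hyM
  rwa [IsLocalRing.mem_maximalIdeal, mem_nonunits_iff, PadicInt.not_isUnit_iff,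
    PadicInt.norm_int_lt_one_iff_dvd] at hyi

end PadicIntegral

section Xd

open Matrix

variable {n : ℕ} [NeZero n]

def scaleFirst (ℓ : ℤ) (x : Fin n → ℤ) : Fin n → ℤ := fun j => if j = 0 then ℓ * x 0 else x j

theorem scaleFirst_injective {ℓ : ℤ} (hℓ : ℓ ≠ 0) :
    Function.Injective (scaleFirst (n := n) ℓ) := by
  intro x y h
  funext j
  have hj := congrFun h j
  by_cases hj0 : j = 0
  · subst hj0
    simpa [scaleFirst, hℓ] using hj
  · simpa [scaleFirst, hj0] using hj

theorem exists_scaleFirst_eq {ℓ : ℤ} {y : Fin n → ℤ} (hy : ℓ ∣ y 0) :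
    ∃ x, scaleFirst ℓ x = y := by
  refine ⟨fun j => if j = 0 then y 0 / ℓ else y j, funext fun j => ?_⟩
  by_cases hj : j = 0
  · subst hj
    simpa [scaleFirst] using Int.mul_ediv_cancel' hy
  · simp [scaleFirst, hj]

theorem intCast_vecMul_piL (ℓ : ℕ) (x : Fin n → ℤ) :
    (fun k => (x k : ℚ)) ᵥ* piL ℓ n = fun k => (scaleFirst ℓ x k : ℚ) := by
  funext j
  by_cases hj : j = 0 <;> simp [piL, vecMul_diagonal, scaleFirst, hj, mul_comm]

theorem memXd_conj_piL_iff {ℓ : ℕ} (hℓ : ℓ ≠ 0) (A : Fin n → Matrix (Fin n) (Fin n) ℚ)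
    (d : Fin n → Fin n) (x : Fin n → ℤ) :
    MemXd (fun i => piL ℓ n * A i * piLinv ℓ n) d x ↔ MemXd A d (scaleFirst ℓ x) := by
  have hscale : ∀ i j, ∑ k, (x k : ℚ) * (piL ℓ n * A i * piLinv ℓ n) k j =
      (∑ k, (scaleFirst ℓ x k : ℚ) * A i k j) * (if j = 0 then (ℓ : ℚ)⁻¹ else 1) := fun i j => by
    change ((fun k => (x k : ℚ)) ᵥ* (piL ℓ n * A i * piLinv ℓ n)) j = _
    rw [← vecMul_vecMul, ← vecMul_vecMul, intCast_vecMul_piL, piLinv, vecMul_diagonal]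
    rfl
  have hunit : ∀ j : Fin n, (if j = 0 then (ℓ : ℚ)⁻¹ else 1) ≠ 0 := fun j => by
    split_ifs <;> simp [hℓ]
  simp only [MemXd, hscale, ne_eq, mul_eq_zero, hunit, or_false]

theorem natCast_dvd_of_memXd {ℓ : ℕ} (hℓ : ℓ.Prime) {A : Fin n → Matrix (Fin n) (Fin n) ℚ}
    (hent : ∀ i j k, InZloc ℓ (A i j k)) (hdetnum : ∀ i, ¬ (ℓ : ℤ) ∣ (A i).det.num)
    (hcol : ∀ i j, j ≠ 0 → InZloc ℓ (A i j 0 / ℓ)) {d : Fin n → Fin n} (hd : d ≠ fun _ => 0)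
    {y : Fin n → ℤ} (hy : MemXd A d y) : (ℓ : ℤ) ∣ y 0 := by
  have := Fact.mk hℓ
  obtain ⟨i, hi⟩ := Function.ne_iff.1 hd
  exact natCast_dvd_of_sum_mul_eq_zero (hent i) (hdetnum i) (hcol i)
    ((hy i).1 0 (Fin.pos_iff_ne_zero.2 hi))

end Xd

theorem piL_bijOn_Xd_general {n : ℕ} [NeZero n] (ℓ : ℕ) (hℓ : ℓ.Prime)
    (A : Fin n → Matrix (Fin n) (Fin n) ℚ)
    (hent : ∀ i j k, InZloc ℓ ((A i) j k))
    (hdetnum : ∀ i, ¬ (ℓ : ℤ) ∣ ((A i).det).num)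
    (hcol : ∀ i j, j ≠ (0 : Fin n) → InZloc ℓ (((A i) j 0) / (ℓ : ℚ)))
    (d : Fin n → Fin n) (hd : d ≠ fun _ => (0 : Fin n)) :
    Set.BijOn (fun x : Fin n → ℤ => fun j => if j = 0 then (ℓ : ℤ) * x 0 else x j)
      {x : Fin n → ℤ | MemXd (fun i => piL ℓ n * A i * piLinv ℓ n) d x}
      {x : Fin n → ℤ | MemXd A d x} := by
  have hmem := memXd_conj_piL_iff hℓ.ne_zero A d
  refine ⟨fun x hx => (hmem x).1 hx,
    (scaleFirst_injective (Int.natCast_ne_zero.2 hℓ.ne_zero)).injOn, fun y hy => ?_⟩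
  obtain ⟨x, rfl⟩ := exists_scaleFirst_eq (natCast_dvd_of_memXd hℓ hent hdetnum hcol hd hy)
  exact ⟨x, (hmem x).2 hy, rfl⟩

/-- For `A_1,…,A_n ∈ Γ_ℓ` and `d ≠ (1,…,1)`, the map
`(x_1,…,x_n) ↦ (ℓx_1, x_2,…,x_n)` is a bijection from `X'(d) ∩ ℤ^n` onto `X(d) ∩ ℤ^n`,
where `X'(d)` is defined using `A_i' = π_ℓ A_i π_ℓ⁻¹`. -/
theorem piL_bijOn_Xd {n : ℕ} [NeZero n] (ℓ : ℕ) (hℓ : ℓ.Prime)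
    (A : Fin n → Matrix (Fin n) (Fin n) ℚ)
    (hent : ∀ i j k, InZloc ℓ ((A i) j k))
    (hdet0 : ∀ i, (A i).det ≠ 0)
    (hdetnum : ∀ i, ¬ (ℓ : ℤ) ∣ ((A i).det).num)
    (hdetden : ∀ i, InZloc ℓ ((A i).det))
    (hcol : ∀ i j, j ≠ (0 : Fin n) → InZloc ℓ (((A i) j 0) / (ℓ : ℚ)))
    (d : Fin n → Fin n) (hd : d ≠ fun _ => (0 : Fin n)) :
    Set.BijOn (fun x : Fin n → ℤ => fun j => if j = 0 then (ℓ : ℤ) * x 0 else x j)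
      {x : Fin n → ℤ | MemXd (fun i => piL ℓ n * A i * piLinv ℓ n) d x}
      {x : Fin n → ℤ | MemXd A d x} :=
  piL_bijOn_Xd_general ℓ hℓ A hent hdetnum hcol d hd
end

section
/- Suppose M_1 and M_2 are K[G]-modules such that: (i) there exists a K[G_1]-module N_2 and an isomorphism of K[G]-modules M_2 ≅ K[G] ⊗_{K[G_1]} N_2 (induction along the inclusion G_1 ≅ G_1×{1} ⊆ G); and (ii) M_1, regarded as a K[G_1]-module by restriction along G_1 ⊆ G, is a free K[G_1]-module. Then the tensor product M_1 ⊗_K M_2, equipped with the diagonal G-action, is a free K[G]-module. -/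
/-!
Write `M₂ ≅ N₂ ⊗ K[G₂]`. Twisting the fibre of `M₁ ⊗ N₂ ⊗ K[G₂]` over `h ∈ G₂` by
`ρ₁(1, h)⁻¹` turns the diagonal action into the action induced from the `G₁`-module
`M₁|G₁ ⊗ N₂`. The same untwisting trick, `N ⊗ K[G₁] ≅ N_triv ⊗ K[G₁]`, shows that
`M₁|G₁ ⊗ N₂` is free because `M₁|G₁ ≅ K[α] ⊗ K[G₁]` is, and inducing a free `K[G₁]`-module to
`G₁ × G₂` gives a free module since `K[G₁] ⊗ K[G₂] ≅ K[G₁ × G₂]`.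
-/

open scoped TensorProduct MonoidAlgebra

namespace Representation

variable {k G V W : Type*} [CommRing k] [AddCommGroup V] [Module k V] [AddCommGroup W]
  [Module k W]

section Monoid

variable [Monoid G]

namespace Equiv

variable {ρ : Representation k G V} {σ : Representation k G W}

noncomputable def toAsModule (φ : ρ.Equiv σ) : ρ.asModule ≃ₗ[k[G]] σ.asModule :=
  .ofLinearMap (IntertwiningMap.equivLinearMapAsModule ρ σ φ.toIntertwiningMap)
    (IntertwiningMap.equivLinearMapAsModule σ ρ φ.symm.toIntertwiningMap)
    (LinearMap.ext φ.apply_symm_apply) (LinearMap.ext φ.symm_apply_apply)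

noncomputable def ofAsModule (e : ρ.asModule ≃ₗ[k[G]] σ.asModule) : ρ.Equiv σ :=
  .mk (ρ.asModuleEquiv.symm ≪≫ₗ e.restrictScalars k ≪≫ₗ σ.asModuleEquiv) fun g ↦ by
    ext v
    have := e.map_smul (MonoidAlgebra.single g 1) (ρ.asModuleEquiv.symm v)
    simp only [single_smul, one_smul] at this
    exact this

theorem free_asModule (φ : ρ.Equiv σ) [Module.Free k[G] ρ.asModule] :
    Module.Free k[G] σ.asModule :=
  .of_equiv φ.toAsModule

variable {U P : Type*} [AddCommGroup U] [Module k U] [AddCommGroup P] [Module k P]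
  {τ : Representation k G U} {π : Representation k G P}

noncomputable def tprodCongr (φ : ρ.Equiv σ) (ψ : τ.Equiv π) : (ρ.tprod τ).Equiv (σ.tprod π) :=
  .mk (TensorProduct.congr φ.toLinearEquiv ψ.toLinearEquiv)
    (φ.toIntertwiningMap.tensor ψ.toIntertwiningMap).isIntertwining'

def compMonoidHom {H : Type*} [Monoid H] (φ : ρ.Equiv σ) (f : H →* G) :
    Representation.Equiv (ρ.comp f) (σ.comp f) :=
  .mk φ.toLinearEquiv fun h ↦ φ.isIntertwining' (f h)

def trivialCongr (e : V ≃ₗ[k] W) : (trivial k G V).Equiv (trivial k G W) :=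
  .mk e fun _ ↦ rfl

end Equiv

section Untwist

variable {H X : Type*} [Monoid H] [MulAction H X]

noncomputable def mapFiberwise (u : X → V →ₗ[k] V) : V ⊗[k] k[X] →ₗ[k] V ⊗[k] k[X] :=
  TensorProduct.lift <| LinearMap.flip <|
    Finsupp.linearCombination k (fun x ↦ (TensorProduct.mk k V k[X]).flip (.single x 1) ∘ₗ u x)
      ∘ₗ (MonoidAlgebra.coeffLinearEquiv k).toLinearMap

@[simp]
theorem mapFiberwise_tmul_single (u : X → V →ₗ[k] V) (v : V) (x : X) (c : k) :
    mapFiberwise u (v ⊗ₜ .single x c) = u x v ⊗ₜ .single x c := by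
  simp [mapFiberwise, ← TensorProduct.tmul_smul]

theorem mapFiberwise_comp (u u' : X → V →ₗ[k] V) :
    mapFiberwise u ∘ₗ mapFiberwise u' = mapFiberwise fun x ↦ u x ∘ₗ u' x := by
  ext v x
  simp

theorem mapFiberwise_id : mapFiberwise (fun _ : X ↦ (LinearMap.id : V →ₗ[k] V)) = .id := by
  ext v x
  simp

noncomputable def Equiv.untwist {ρ ρ' : Representation k G V} (f : G →* H)
    (u : X → V ≃ₗ[k] V) (hu : ∀ g x v, u (f g • x) (ρ g v) = ρ' g (u x v)) :
    Representation.Equiv (ρ.tprod ((ofMulAction k H X).comp f))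
      (ρ'.tprod ((ofMulAction k H X).comp f)) :=
  .mk (.ofLinearMap (mapFiberwise fun x ↦ u x) (mapFiberwise fun x ↦ (u x).symm)
      (by simp [mapFiberwise_comp, mapFiberwise_id])
      (by simp [mapFiberwise_comp, mapFiberwise_id])) fun g ↦ by
    ext v x
    simp [hu]

end Untwist

noncomputable def Equiv.ofBasis {ρ : Representation k G V} {α : Type*}
    (b : Module.Basis α k[G] ρ.asModule) :
    ((trivial k G k[α]).tprod (leftRegular k G)).Equiv ρ :=
  (TensorProduct.comm _ _).trans <| (leftRegularTensorTrivialIsoFree α).trans <|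
    ofAsModule ((finsuppLEquivFreeAsModule k G α).symm ≪≫ₗ b.repr.symm)

variable (k G W) in
theorem free_asModule_trivial_tprod_leftRegular [Module.Free k W] :
    Module.Free k[G] ((trivial k G W).tprod (leftRegular k G)).asModule := by
  let α := Module.Free.ChooseBasisIndex k W
  let e : k[α] ≃ₗ[k] W :=
    ((Module.Free.chooseBasis k W).repr ≪≫ₗ (MonoidAlgebra.coeffLinearEquiv k).symm).symm
  have := free_asModule_free k G α
  exact Equiv.free_asModule <| ((leftRegularTensorTrivialIsoFree α).symm.trans
    (TensorProduct.comm _ _)).trans ((Equiv.trivialCongr e).tprodCongr (.refl _))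

end Monoid

section Prod

variable {G₁ G₂ : Type*}

noncomputable def Equiv.leftRegularProd [Monoid G₁] [Monoid G₂] :
    (tprod ((leftRegular k G₁).comp (MonoidHom.fst G₁ G₂))
      ((leftRegular k G₂).comp (MonoidHom.snd G₁ G₂))).Equiv (leftRegular k (G₁ × G₂)) :=
  .mk (MonoidAlgebra.tensorEquiv k) fun g ↦ by
    ext
    simp
    rfl

theorem free_asModule_comp_fst_tprod_leftRegular_comp_snd [Monoid G₁] [Monoid G₂]
    {ρ : Representation k G₁ V} [Module.Free k[G₁] ρ.asModule] :
    Module.Free k[G₁ × G₂] (tprod (ρ.comp (MonoidHom.fst G₁ G₂))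
      ((leftRegular k G₂).comp (MonoidHom.snd G₁ G₂))).asModule := by
  let α := Module.Free.ChooseBasisIndex k[G₁] ρ.asModule
  have := free_asModule_trivial_tprod_leftRegular k (G₁ × G₂) k[α]
  have φ : Representation.Equiv (tprod (trivial k (G₁ × G₂) k[α])
      ((leftRegular k G₁).comp (MonoidHom.fst G₁ G₂))) (ρ.comp (MonoidHom.fst G₁ G₂)) :=
    (Equiv.ofBasis (Module.Free.chooseBasis k[G₁] ρ.asModule)).compMonoidHom _
  exact Equiv.free_asModule <| ((Equiv.refl _).tprodCongr Equiv.leftRegularProd.symm).trans <|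
    (TensorProduct.assoc _ _ _).symm.trans (φ.tprodCongr (.refl _))

noncomputable def Equiv.untwistSnd [Group G₁] [Group G₂] (ρ : Representation k (G₁ × G₂) V) :
    (ρ.tprod ((leftRegular k G₂).comp (MonoidHom.snd G₁ G₂))).Equiv
      (tprod ((ρ.comp (MonoidHom.inl G₁ G₂)).comp (MonoidHom.fst G₁ G₂))
        ((leftRegular k G₂).comp (MonoidHom.snd G₁ G₂))) :=
  untwist (MonoidHom.snd G₁ G₂) (fun h ↦ .ofBijective (ρ (1, h)⁻¹) (ρ.apply_bijective _))
    fun g h v ↦ by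
      simp only [LinearEquiv.ofBijective_apply, MonoidHom.coe_comp, Function.comp_apply]
      rw [← Module.End.mul_apply, ← map_mul, ← Module.End.mul_apply, ← map_mul]
      congr 2
      ext <;> simp

end Prod

section Group

variable [Group G]

noncomputable def Equiv.untwistLeftRegular (ρ : Representation k G V) :
    (ρ.tprod (leftRegular k G)).Equiv ((trivial k G V).tprod (leftRegular k G)) :=
  untwist (MonoidHom.id G) (fun x ↦ .ofBijective (ρ x⁻¹) (ρ.apply_bijective _)) fun g x v ↦ by
    simp [mul_inv_rev, Module.End.mul_apply]

theorem free_asModule_tprod {ρ : Representation k G V} [Module.Free k[G] ρ.asModule]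
    (τ : Representation k G W) [Module.Free k W] : Module.Free k[G] (ρ.tprod τ).asModule := by
  let α := Module.Free.ChooseBasisIndex k[G] ρ.asModule
  have := free_asModule_trivial_tprod_leftRegular k G (W ⊗[k] k[α])
  exact Equiv.free_asModule <|
    (Equiv.untwistLeftRegular (τ.tprod (trivial k G k[α]))).symm.trans <|
      (TensorProduct.assoc _ _ _).trans <|
        ((Equiv.refl τ).tprodCongr (.ofBasis (Module.Free.chooseBasis k[G] ρ.asModule))).trans <|
          TensorProduct.comm _ _

end Group

end Representation

/-- Let `K` be a field, `G = G₁ × G₂`, and let `M₁, M₂` be `K[G]`-modules (given as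
representations `ρ₁, ρ₂` of `G` on the `K`-vector spaces `M₁, M₂`).  Suppose
(i) `M₂` is induced from a `K[G₁]`-module `N₂` (with representation `τ`), i.e. there is a
`K[G]`-module isomorphism `M₂ ≅ K[G] ⊗_{K[G₁]} N₂ ≅ N₂ ⊗_K K[G₂]`, where `G₁` acts via
`τ` on `N₂` and `G₂` by translation on `K[G₂]`; and
(ii) `M₁`, restricted along `G₁ ≅ G₁ × {1} ⊆ G`, is a free `K[G₁]`-module.
Then `M₁ ⊗_K M₂` with the diagonal `G`-action is a free `K[G]`-module. -/
theorem tensor_with_induced_free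
    (K : Type*) [Field K] (G₁ G₂ : Type*) [Group G₁] [Group G₂]
    (M₁ M₂ : Type*) [AddCommGroup M₁] [Module K M₁] [AddCommGroup M₂] [Module K M₂]
    (ρ₁ : Representation K (G₁ × G₂) M₁) (ρ₂ : Representation K (G₁ × G₂) M₂)
    (N₂ : Type*) [AddCommGroup N₂] [Module K N₂] (τ : Representation K G₁ N₂)
    (e : M₂ ≃ₗ[K] N₂ ⊗[K] MonoidAlgebra K G₂)
    (he : ∀ (g : G₁ × G₂) (w : M₂),
      e (ρ₂ g w) =
        (Representation.tprod (τ.comp (MonoidHom.fst G₁ G₂))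
          ((Representation.ofMulAction K G₂ G₂).comp (MonoidHom.snd G₁ G₂))) g (e w))
    (hfree : Module.Free (MonoidAlgebra K G₁)
      (Representation.asModule (ρ₁.comp (MonoidHom.inl G₁ G₂)))) :
    Module.Free (MonoidAlgebra K (G₁ × G₂)) (Representation.asModule (ρ₁.tprod ρ₂)) := by
  have hρ₂ : ρ₂.Equiv (.tprod (τ.comp (MonoidHom.fst G₁ G₂))
      ((Representation.leftRegular K G₂).comp (MonoidHom.snd G₁ G₂))) :=
    .mk e fun g ↦ LinearMap.ext (he g)
  have : Module.Free (MonoidAlgebra K G₁)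
      (Representation.tprod (ρ₁.comp (MonoidHom.inl G₁ G₂)) τ).asModule :=
    Representation.free_asModule_tprod τ
  have := Representation.free_asModule_comp_fst_tprod_leftRegular_comp_snd (G₂ := G₂)
    (ρ := Representation.tprod (ρ₁.comp (MonoidHom.inl G₁ G₂)) τ)
  have φ : Representation.Equiv
      (.tprod ((Representation.tprod (ρ₁.comp (MonoidHom.inl G₁ G₂)) τ).comp
        (MonoidHom.fst G₁ G₂)) ((Representation.leftRegular K G₂).comp (MonoidHom.snd G₁ G₂)))
      (ρ₁.tprod ρ₂) :=
    (Representation.Equiv.untwistSnd (ρ₁.tprod (τ.comp (MonoidHom.fst G₁ G₂)))).symm.trans <|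
      (Representation.TensorProduct.assoc _ _ _).trans
        ((Representation.Equiv.refl ρ₁).tprodCongr hρ₂.symm)
  exact φ.free_asModule
end
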